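/- For all γ, δ < ω₁ there exists an infinite N ⊆ ℕ such that for every nonempty F ∈ S_δ and every family (E_i)_{i∈F} of members of S_γ with E_i < E_j whenever i < j in F and min E_i ≥ N(i) for all i ∈ F, one has ⋃_{i∈F} E_i ∈ S_{γ+δ}. -/

import Mathlib

noncomputable section

open Filter Set

namespace SchreierPaper

/-- `ω₁`, the first uncountable ordinal. -/
def omega1 : Ordinal := (Cardinal.aleph 1).ord

/-- `E < F` for finite sets of naturals: every element of `E` is smaller than
every element of `F` (this agrees with `max E < min F` under the conventions
`max ∅ = 0`, `min ∅ = ∞`). -/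
def BlockLt (E F : Finset ℕ) : Prop := ∀ i ∈ E, ∀ j ∈ F, i < j

/-- A Schreier system: the hierarchy of Schreier families `S ξ` of finite sets of
positive integers, together with the fixed choice `limSeq` of cofinal sequences at
countable limit ordinals used in the recursive definition. -/
structure SchreierSystem where
  S : Ordinal → Set (Finset ℕ)
  limSeq : Ordinal → ℕ → Ordinal
  zero_def : S 0 = {E : Finset ℕ | E = ∅ ∨ ∃ n : ℕ, 0 < n ∧ E = {n}}
  succ_def : ∀ ξ : Ordinal,
    S (ξ + 1) = {E : Finset ℕ | E = ∅ ∨ ∃ (k : ℕ) (Es : Fin k → Finset ℕ), 0 < k ∧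
      (∀ i, (Es i).Nonempty ∧ Es i ∈ S ξ) ∧
      (∀ i j : Fin k, i < j → BlockLt (Es i) (Es j)) ∧
      (∀ m ∈ E, k ≤ m) ∧ E = Finset.univ.biUnion Es}
  limSeq_lt : ∀ ξ : Ordinal, ξ < omega1 → Order.IsSuccLimit ξ → ∀ n : ℕ, limSeq ξ n < ξ
  limSeq_strictMono : ∀ ξ : Ordinal, ξ < omega1 → Order.IsSuccLimit ξ → StrictMono (limSeq ξ)
  limSeq_cofinal : ∀ ξ : Ordinal, ξ < omega1 → Order.IsSuccLimit ξ → ∀ β < ξ, ∃ n : ℕ, β ≤ limSeq ξ n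
  limSeq_nested : ∀ ξ : Ordinal, ξ < omega1 → Order.IsSuccLimit ξ →
    ∀ n : ℕ, S (limSeq ξ n + 1) ⊆ S (limSeq ξ (n + 1))
  lim_def : ∀ ξ : Ordinal, ξ < omega1 → Order.IsSuccLimit ξ →
    S ξ = {E : Finset ℕ | E = ∅ ∨ (E.Nonempty ∧ ∃ n : ℕ, (∀ m ∈ E, n ≤ m) ∧
      E ∈ S (limSeq ξ n + 1))}

/-- The Schreier norm `‖x‖_ξ` of a finitely supported sequence. -/
def schreierNorm (SS : SchreierSystem) (ξ : Ordinal) (x : ℕ →₀ ℝ) : ℝ :=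
  sSup {c : ℝ | ∃ E ∈ SS.S ξ, c = ∑ i ∈ E, |x i|}

/-- The action of a finitely supported functional (coefficients with respect to the
coordinate functionals) on a finitely supported vector. -/
def pairing (g x : ℕ →₀ ℝ) : ℝ := g.sum fun j c => c * x j

/-- The dual norm of `X_ξ^*` on finitely supported functionals. -/
def dualNorm (SS : SchreierSystem) (ξ : Ordinal) (g : ℕ →₀ ℝ) : ℝ :=
  sSup {c : ℝ | ∃ x : ℕ →₀ ℝ, schreierNorm SS ξ x ≤ 1 ∧ c = |pairing g x|}

/-- The canonical unit vector `e_n` (also used for the coordinate functional `f_n`). -/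
def unitVec (n : ℕ) : ℕ →₀ ℝ := Finsupp.single n 1

/-- A block sequence: nonzero, finitely supported, supported on positive integers,
with successive supports. -/
def IsBlockSeq (x : ℕ → ℕ →₀ ℝ) : Prop :=
  (∀ i, x i ≠ 0) ∧ (∀ i, ∀ a ∈ (x i).support, 0 < a) ∧
    ∀ i, BlockLt (x i).support (x (i + 1)).support

/-- A normalized block sequence in the Schreier space `X_ξ`. -/
def IsNormalizedBlockSeq (SS : SchreierSystem) (ξ : Ordinal) (x : ℕ → ℕ →₀ ℝ) : Prop :=
  IsBlockSeq x ∧ ∀ i, schreierNorm SS ξ (x i) = 1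

/-- A normalized block sequence in the dual space `X_ξ^*`. -/
def IsNormalizedDualBlockSeq (SS : SchreierSystem) (ξ : Ordinal) (x : ℕ → ℕ →₀ ℝ) : Prop :=
  IsBlockSeq x ∧ ∀ i, dualNorm SS ξ (x i) = 1

/-- The linear combination `∑ a_i u_i` for finitely supported scalars `a`. -/
def combo (u : ℕ → ℕ →₀ ℝ) (a : ℕ →₀ ℝ) : ℕ →₀ ℝ := a.sum fun i c => c • u i

/-- Equivalence of two sequences with respect to two (norm) functions. -/
def SeqEquiv (N₁ : (ℕ →₀ ℝ) → ℝ) (u : ℕ → ℕ →₀ ℝ)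
    (N₂ : (ℕ →₀ ℝ) → ℝ) (v : ℕ → ℕ →₀ ℝ) : Prop :=
  ∃ C : ℝ, 1 ≤ C ∧ ∀ a : ℕ →₀ ℝ,
    C⁻¹ * N₂ (combo v a) ≤ N₁ (combo u a) ∧ N₁ (combo u a) ≤ C * N₂ (combo v a)

/-- A `ϱ`-Schreier pair `((x_i), (x*_i))` in `X_ξ × X_ξ^*`. -/
def IsSchreierPair (SS : SchreierSystem) (ξ ϱ : Ordinal) (x xs : ℕ → ℕ →₀ ℝ) : Prop :=
  IsNormalizedBlockSeq SS ξ x ∧ IsNormalizedDualBlockSeq SS ξ xs ∧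
  (∀ i j, i ≠ j → pairing (xs i) (x j) = 0) ∧
  (∀ i, pairing (xs i) (x i) = ∑ j ∈ (xs i).support, |xs i j| * |x i j|) ∧
  (∃ δ : ℝ, 0 < δ ∧ ∀ i, δ ≤ pairing (xs i) (x i)) ∧
  (∃ J : ℕ → ℕ, StrictMono J ∧ (∀ i, 0 < J i) ∧
    SeqEquiv (schreierNorm SS ξ) x (schreierNorm SS ϱ) (fun i => unitVec (J i)) ∧
    SeqEquiv (dualNorm SS ξ) xs (dualNorm SS ϱ) (fun i => unitVec (J i))) ∧
  (∃ C : ℝ, ∀ n : ℕ, ∀ y : ℕ →₀ ℝ,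
    schreierNorm SS ξ (∑ i ∈ Finset.range n, pairing (xs i) y • x i) ≤ C * schreierNorm SS ξ y)

/-- `I(ξ)`: the set of partial sums of the Cantor normal form of `ξ`, characterized as
the ordinals `ι ≤ ξ` that are minimal among the ordinals `ι'` with `ι' + (ξ - ι) = ξ`. -/
def IOrd (ξ : Ordinal) : Set Ordinal :=
  {ι | ι ≤ ξ ∧ ∀ ι' : Ordinal, ι' + (ξ - ι) = ξ → ι ≤ ι'}

/-- `R(ξ) = {ξ - ι : ι ≤ ξ}`: the set of ordinals `ϱ` such that `ι + ϱ = ξ` for some `ι`. -/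
def ROrd (ξ : Ordinal) : Set Ordinal := {ϱ | ∃ ι : Ordinal, ι + ϱ = ξ}

/-- The family `A_n[S_γ]` of unions of at most `n` successive members of `S γ`. -/
def AnS (SS : SchreierSystem) (n : ℕ) (γ : Ordinal) : Set (Finset ℕ) :=
  {E : Finset ℕ | E = ∅ ∨ ∃ (k : ℕ) (Es : Fin k → Finset ℕ), 0 < k ∧ k ≤ n ∧
    (∀ i, (Es i).Nonempty ∧ Es i ∈ SS.S γ) ∧
    (∀ i j : Fin k, i < j → BlockLt (Es i) (Es j)) ∧ E = Finset.univ.biUnion Es}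

/-- The `⊆`-maximal members of a family of finite sets. -/
def MAXf (F : Set (Finset ℕ)) : Set (Finset ℕ) := {E | E ∈ F ∧ ∀ G ∈ F, E ⊆ G → E = G}

/-- `T_ε x*`: the part of a functional with coefficients of absolute value `> ε`. -/
def Ttrunc (ε : ℝ) (g : ℕ →₀ ℝ) : ℕ →₀ ℝ :=
  haveI := Classical.decPred fun j : ℕ => ε < |g j|
  g.filter fun j => ε < |g j|

/-- `R_ε x*`: the part of a functional with coefficients of absolute value `≤ ε`. -/
def Rtrunc (ε : ℝ) (g : ℕ →₀ ℝ) : ℕ →₀ ℝ :=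
  haveI := Classical.decPred fun j : ℕ => |g j| ≤ ε
  g.filter fun j => |g j| ≤ ε

/-- A `ξ`-flat block sequence of functionals:
`inf_{ε>0} limsup_i ‖R_ε y*_i‖ > 0`. -/
def XiFlat (SS : SchreierSystem) (ξ : Ordinal) (y : ℕ → ℕ →₀ ℝ) : Prop :=
  ∃ δ : ℝ, 0 < δ ∧ ∀ ε : ℝ, 0 < ε →
    δ ≤ Filter.limsup (fun i => dualNorm SS ξ (Rtrunc ε (y i))) Filter.atTop

/-- An `ι`-approachable block sequence of functionals. -/
def Approachable (SS : SchreierSystem) (ι : Ordinal) (y : ℕ → ℕ →₀ ℝ) : Prop :=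
  ∃ ϑ : ℝ, 0 < ϑ ∧ ∀ β < ι, ∀ n j : ℕ, ∃ i > j,
    (Ttrunc ϑ (y i)).support ∉ (AnS SS n β \ MAXf (AnS SS n β))

/-- Auxiliary recursion: given the "first average" operation `G` on infinite sets,
produce the sequence of successive averages, each taken on the set with all the
previous supports removed. -/
def iterAvg (G : Set ℕ → (ℕ →₀ ℝ)) (M : Set ℕ) : ℕ → (ℕ →₀ ℝ) := fun n =>
  Nat.strongRec (fun n prev =>
    G (M \ ⋃ (i : ℕ) (h : i < n), ((prev i h).support : Set ℕ))) n

/-- The repeated averages hierarchy `𝕊^ξ_{M,n}` (with `n` running from `0`). -/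
def RA (SS : SchreierSystem) (ξ : Ordinal) : Set ℕ → ℕ → (ℕ →₀ ℝ) :=
  Ordinal.limitRecOn (motive := fun _ => Set ℕ → ℕ → (ℕ →₀ ℝ)) ξ
    (fun M n => Finsupp.single (Nat.nth (· ∈ M) n) (1 : ℝ))
    (fun _ ih M => iterAvg
      (fun N => ((sInf N : ℕ) : ℝ)⁻¹ • ∑ j ∈ Finset.range (sInf N), ih N j) M)
    (fun ξ _ ih M => iterAvg
      (fun N => if h : SS.limSeq ξ (sInf N) + 1 < ξ then ih _ h N 0 else 0) M)

/-- The modified Schreier families `S^M_ξ`, defined with the same fixed cofinal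
sequences as the given Schreier system. -/
def SMod (SS : SchreierSystem) (ξ : Ordinal) : Set (Finset ℕ) :=
  Ordinal.limitRecOn (motive := fun _ => Set (Finset ℕ)) ξ
    {E : Finset ℕ | E = ∅ ∨ ∃ n : ℕ, 0 < n ∧ E = {n}}
    (fun _ ih => {E : Finset ℕ | E = ∅ ∨ ∃ (k : ℕ) (Es : Fin k → Finset ℕ), 0 < k ∧
      (∀ i, (Es i).Nonempty ∧ Es i ∈ ih ∧ ∀ m ∈ Es i, k ≤ m) ∧
      (∀ i j : Fin k, i ≠ j → Disjoint (Es i) (Es j)) ∧ E = Finset.univ.biUnion Es})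
    (fun ξ _ ih => {E : Finset ℕ | E = ∅ ∨ (E.Nonempty ∧ ∃ n : ℕ, (∀ m ∈ E, n ≤ m) ∧
      ∃ h : SS.limSeq ξ n + 1 < ξ, E ∈ ih _ h)})

/-- `τ_ξ(A)`: the least number of successive members of `S ξ` whose union is `A`. -/
def tau (SS : SchreierSystem) (ξ : Ordinal) (A : Finset ℕ) : ℕ :=
  sInf {k : ℕ | ∃ Fs : Fin k → Finset ℕ, (∀ i, Fs i ∈ SS.S ξ) ∧
    (∀ i j : Fin k, i < j → BlockLt (Fs i) (Fs j)) ∧ A = Finset.univ.biUnion Fs}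

/-- A map `ψ` defined on an infinite set `L` is `ξ`-injective if
`sup_{F ∈ S ξ} τ_ξ(ψ⁻¹(F)) < ∞` (in particular all these preimages are finite). -/
def XiInjective (SS : SchreierSystem) (ξ : Ordinal) (L : Set ℕ) (ψ : ℕ → ℕ) : Prop :=
  ∃ C : ℕ, ∀ F ∈ SS.S ξ, ∃ A : Finset ℕ, (↑A = {x ∈ L | ψ x ∈ F}) ∧ tau SS ξ A ≤ C

/-- The sum of the indicator functionals of a finite set. -/
def indicatorFs (s : Finset ℕ) : ℕ →₀ ℝ := ∑ j ∈ s, Finsupp.single j 1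

section Operators

variable {X Y : Type*} [NormedAddCommGroup X] [NormedSpace ℝ X]
  [NormedAddCommGroup Y] [NormedSpace ℝ Y]

/-- A strictly singular operator. -/
def StrictlySingular (T : X →L[ℝ] Y) : Prop :=
  ∀ ε : ℝ, 0 < ε → ∀ Z : Submodule ℝ X, ¬ FiniteDimensional ℝ Z →
    ∃ x ∈ Z, ‖x‖ = 1 ∧ ‖T x‖ < ε

/-- A basic sequence in a normed space. -/
def IsBasicSeq (x : ℕ → X) : Prop :=
  (∀ i, x i ≠ 0) ∧ ∃ K : ℝ, ∀ m n : ℕ, m ≤ n → ∀ a : ℕ → ℝ,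
    ‖∑ i ∈ Finset.range m, a i • x i‖ ≤ K * ‖∑ i ∈ Finset.range n, a i • x i‖

/-- An `S_ϱ`-strictly singular operator. -/
def SSsingular (SS : SchreierSystem) (ϱ : Ordinal) (T : X →L[ℝ] Y) : Prop :=
  ∀ ε : ℝ, 0 < ε → ∀ x : ℕ → X, IsBasicSeq x →
    ∃ F ∈ SS.S ϱ, ∃ v ∈ Submodule.span ℝ {w : X | ∃ i ∈ F, w = x i},
      ‖v‖ = 1 ∧ ‖T v‖ < ε

/-- A compact operator: the image of the unit ball is relatively compact. -/
def CompactOp (T : X →L[ℝ] Y) : Prop :=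
  IsCompact (closure (⇑T '' Metric.closedBall 0 1))

/-- A finitely strictly singular operator. -/
def FinitelyStrictlySingular (T : X →L[ℝ] Y) : Prop :=
  ∀ ε : ℝ, 0 < ε → ∃ n : ℕ, ∀ E : Submodule ℝ X, FiniteDimensional ℝ E →
    Module.finrank ℝ E = n → ∃ x ∈ E, ‖x‖ = 1 ∧ ‖T x‖ < ε

/-- A closed operator ideal on a Banach space: a norm-closed linear subspace of the
bounded operators, stable under two-sided composition with bounded operators. -/
def IsClosedOperatorIdeal (I : Set (X →L[ℝ] X)) : Prop :=
  IsClosed I ∧ (0 : X →L[ℝ] X) ∈ I ∧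
  (∀ S T : X →L[ℝ] X, S ∈ I → T ∈ I → S + T ∈ I) ∧
  (∀ (c : ℝ) (T : X →L[ℝ] X), T ∈ I → c • T ∈ I) ∧
  (∀ A B : X →L[ℝ] X, ∀ T ∈ I, A.comp (T.comp B) ∈ I)

end Operators


lemma add_lt_omega1 {γ δ : Ordinal} (hγ : γ < omega1) (hδ : δ < omega1) :
    γ + δ < omega1 := by
  rw [omega1, Cardinal.lt_ord] at *
  rw [Ordinal.card_add]
  exact Cardinal.add_lt_of_lt (Cardinal.aleph0_le_aleph 1) hγ hδ

lemma empty_mem (SS : SchreierSystem) {ξ : Ordinal} (hξ : ξ < omega1) :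
    (∅ : Finset ℕ) ∈ SS.S ξ := by
  rcases Ordinal.zero_or_succ_or_isSuccLimit ξ with h | ⟨a, rfl⟩ | h
  · subst h; rw [SS.zero_def]; exact Or.inl rfl
  · rw [← Ordinal.add_one_eq_succ, SS.succ_def]; exact Or.inl rfl
  · rw [SS.lim_def ξ hξ h]; exact Or.inl rfl

lemma pos_succ (SS : SchreierSystem) {ζ : Ordinal} {F : Finset ℕ}
    (hF : F ∈ SS.S (ζ + 1)) : ∀ m ∈ F, 0 < m := by
  rw [SS.succ_def] at hF
  rcases hF with rfl | ⟨k, Es, hk, _, _, hmin, _⟩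
  · simp
  · intro m hm; exact lt_of_lt_of_le hk (hmin m hm)

lemma union_blocks (SS : SchreierSystem) (ζ : Ordinal) (k : ℕ) (G : Fin k → Finset ℕ)
    (hG : ∀ j, G j ∈ SS.S ζ)
    (hlt : ∀ j j' : Fin k, j < j' → BlockLt (G j) (G j'))
    (A : Finset ℕ) (hA : ∀ m, m ∈ A ↔ ∃ j, m ∈ G j)
    (hmin : ∀ m ∈ A, k ≤ m) : A ∈ SS.S (ζ + 1) := by
  classical
  rw [SS.succ_def]
  rcases eq_or_ne A ∅ with rfl | hne
  · exact Or.inl rfl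
  right
  set T : Finset (Fin k) := Finset.univ.filter (fun j => (G j).Nonempty) with hT
  have hcard : T.card ≤ k := le_trans (Finset.card_filter_le _ _) (by simp)
  have hTne : 0 < T.card := by
    obtain ⟨m, hm⟩ := Finset.nonempty_iff_ne_empty.mpr hne
    obtain ⟨j, hj⟩ := (hA m).mp hm
    exact Finset.card_pos.mpr ⟨j, by simp [hT]; exact ⟨m, hj⟩⟩
  refine ⟨T.card, fun i => G ((T.orderIsoOfFin rfl i : T) : Fin k), hTne, ?_, ?_, ?_, ?_⟩
  · intro i
    have hmem : ((T.orderIsoOfFin rfl i : T) : Fin k) ∈ T := (T.orderIsoOfFin rfl i).2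
    have := (Finset.mem_filter.mp hmem).2
    exact ⟨this, hG _⟩
  · intro i j hij
    apply hlt
    exact_mod_cast (T.orderIsoOfFin rfl).strictMono hij
  · intro m hm; exact le_trans hcard (hmin m hm)
  · ext m
    rw [Finset.mem_biUnion]
    rw [hA m]
    constructor
    · rintro ⟨j, hj⟩
      have hjT : j ∈ T := by simp [hT]; exact ⟨m, hj⟩
      refine ⟨(T.orderIsoOfFin rfl).symm ⟨j, hjT⟩, Finset.mem_univ _, ?_⟩
      rw [OrderIso.apply_symm_apply]
      exact hj
    · rintro ⟨i, _, hi⟩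
      exact ⟨_, hi⟩

lemma transfer (SS : SchreierSystem) : ∀ ξ : Ordinal, ξ < omega1 → ∀ β < ξ, ∃ n : ℕ,
    ∀ F ∈ SS.S β, (∀ m ∈ F, n ≤ m) → F ∈ SS.S ξ := by
  intro ξ
  induction ξ using Ordinal.induction with
  | _ ξ IH =>
  intro hξ β hβ
  rcases Ordinal.zero_or_succ_or_isSuccLimit ξ with rfl | ⟨ζ, rfl⟩ | hlim
  · exact absurd hβ (not_lt_of_ge (zero_le (a := β)))
  · have hζξ : ζ < Order.succ ζ := Order.lt_succ ζ
    have hζ : ζ < omega1 := lt_trans hζξ hξ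
    have hstep : ∃ n', ∀ F ∈ SS.S β, (∀ m ∈ F, n' ≤ m) → F ∈ SS.S ζ := by
      rcases lt_or_eq_of_le (Order.lt_succ_iff.mp hβ) with h | rfl
      · exact IH ζ hζξ hζ β h
      · exact ⟨0, fun F hF _ => hF⟩
    obtain ⟨n', hn'⟩ := hstep
    refine ⟨max n' 1, fun F hF hm => ?_⟩
    rw [← Ordinal.add_one_eq_succ]
    refine union_blocks SS ζ 1 (fun _ => F)
      (fun _ => hn' F hF (fun m hm' => le_trans (le_max_left _ _) (hm m hm')))
      (fun j j' hjj' => absurd (Fin.lt_def.mp hjj') (by have := j'.isLt; omega)) F (fun m => ?_)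
      (fun m hm' => le_trans (le_max_right _ _) (hm m hm'))
    constructor
    · intro h; exact ⟨0, h⟩
    · rintro ⟨_, h⟩; exact h
  · obtain ⟨p, hp⟩ := SS.limSeq_cofinal ξ hξ hlim β hβ
    have hζ' : SS.limSeq ξ p + 1 < ξ := by
      rw [Ordinal.add_one_eq_succ]
      exact hlim.succ_lt (SS.limSeq_lt ξ hξ hlim p)
    obtain ⟨n', hn'⟩ := IH _ hζ' (lt_trans hζ' hξ) β
      (lt_of_le_of_lt hp (by rw [Ordinal.add_one_eq_succ]; exact Order.lt_succ _))
    refine ⟨max n' p, fun F hF hm => ?_⟩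
    rcases eq_or_ne F ∅ with rfl | hne
    · exact empty_mem SS hξ
    rw [SS.lim_def ξ hξ hlim]
    exact Or.inr ⟨Finset.nonempty_iff_ne_empty.mpr hne, p,
      fun m hm' => le_trans (le_max_right _ _) (hm m hm'),
      hn' F hF (fun m hm' => le_trans (le_max_left _ _) (hm m hm'))⟩

lemma nth_range {f : ℕ → ℕ} (hf : StrictMono f) (n : ℕ) :
    Nat.nth (· ∈ Set.range f) n = f n := by
  classical
  have hmem : f n ∈ Set.range f := ⟨n, rfl⟩
  have hcount : Nat.count (· ∈ Set.range f) (f n) = n := by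
    rw [Nat.count_eq_card_filter_range]
    have : (Finset.range (f n)).filter (· ∈ Set.range f) = (Finset.range n).image f := by
      ext x
      simp only [Finset.mem_filter, Finset.mem_range, Finset.mem_image, Set.mem_range]
      constructor
      · rintro ⟨hx, k, rfl⟩; exact ⟨k, hf.lt_iff_lt.mp hx, rfl⟩
      · rintro ⟨k, hk, rfl⟩; exact ⟨hf hk, k, rfl⟩
    rw [this, Finset.card_image_of_injective _ hf.injective, Finset.card_range]
  conv_rhs => rw [← Nat.nth_count hmem]
  rw [hcount]

lemma one_le_nth {p : ℕ → Prop} (hp : (setOf p).Infinite) (hpos : ∀ m, p m → 0 < m) :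
    ∀ j, j + 1 ≤ Nat.nth p j := by
  intro j
  induction j with
  | zero => exact hpos _ (Nat.nth_mem_of_infinite hp 0)
  | succ j ih => exact lt_of_le_of_lt ih (Nat.nth_strictMono hp (Nat.lt_succ_self j))

lemma key (SS : SchreierSystem) (γ : Ordinal) (hγ : γ < omega1) :
    ∀ δ : Ordinal, δ < omega1 →
    ∃ N : Set ℕ, N.Infinite ∧ (∀ m ∈ N, 0 < m) ∧
      ∀ F ∈ SS.S δ, F.Nonempty → ∀ E : ℕ → Finset ℕ,
        (∀ i ∈ F, E i ∈ SS.S γ) →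
        (∀ i ∈ F, ∀ j ∈ F, i < j → BlockLt (E i) (E j)) →
        (∀ i ∈ F, ∀ m ∈ E i, Nat.nth (· ∈ N) (i - 1) ≤ m) →
        F.biUnion E ∈ SS.S (γ + δ) := by
  intro δ
  induction δ using Ordinal.induction with
  | _ δ IH =>
  intro hδ
  rcases Ordinal.zero_or_succ_or_isSuccLimit δ with rfl | ⟨ξ, rfl⟩ | hlim
  -- case δ = 0
  · refine ⟨Set.Ioi 0, Set.Ioi_infinite 0, fun m hm => hm, ?_⟩
    intro F hF hFne E hE _ _
    rw [SS.zero_def] at hF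
    rcases hF with rfl | ⟨n, hn, rfl⟩
    · exact absurd hFne (by simp)
    · rw [add_zero]
      simpa using hE n (by simp)
  -- case δ = ξ + 1
  · have hξδ : ξ < Order.succ ξ := Order.lt_succ ξ
    have hξ : ξ < omega1 := lt_trans hξδ hδ
    obtain ⟨N, hNinf, hNpos, hNkey⟩ := IH ξ hξδ hξ
    refine ⟨N, hNinf, hNpos, ?_⟩
    intro F hF hFne E hE hElt hEmin
    rw [← Ordinal.add_one_eq_succ, SS.succ_def] at hF
    rcases hF with rfl | ⟨k, Fs, hk, hFs, hFslt, hFmin, hFeq⟩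
    · exact absurd hFne (by simp)
    have hsub : ∀ j : Fin k, Fs j ⊆ F := by
      intro j x hx; rw [hFeq]; exact Finset.mem_biUnion.mpr ⟨j, Finset.mem_univ j, hx⟩
    have hGj : ∀ j : Fin k, (Fs j).biUnion E ∈ SS.S (γ + ξ) := fun j =>
      hNkey (Fs j) (hFs j).2 (hFs j).1 E (fun i hi => hE i (hsub j hi))
        (fun i hi i' hi' h => hElt i (hsub j hi) i' (hsub j hi') h)
        (fun i hi m hm => hEmin i (hsub j hi) m hm)
    have hGlt : ∀ j j' : Fin k, j < j' →
        BlockLt ((Fs j).biUnion E) ((Fs j').biUnion E) := by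
      intro j j' hjj' a ha b hb
      obtain ⟨i, hi, hai⟩ := Finset.mem_biUnion.mp ha
      obtain ⟨i', hi', hbi'⟩ := Finset.mem_biUnion.mp hb
      exact hElt i (hsub j hi) i' (hsub j' hi')
        (hFslt j j' hjj' i hi i' hi') a hai b hbi'
    have hnth : ∀ j : ℕ, j + 1 ≤ Nat.nth (· ∈ N) j :=
      one_le_nth (by exact hNinf) (fun m hm => hNpos m hm)
    have hAmin : ∀ m ∈ F.biUnion E, k ≤ m := by
      intro m hm
      obtain ⟨i, hi, hmi⟩ := Finset.mem_biUnion.mp hm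
      have h1 := hEmin i hi m hmi
      have h2 := hnth (i - 1)
      have h3 := hFmin i hi
      have h4 : 0 < i := lt_of_lt_of_le hk h3
      omega
    rw [← Ordinal.add_one_eq_succ, ← add_assoc]
    refine union_blocks SS (γ + ξ) k (fun j => (Fs j).biUnion E) hGj hGlt
      (F.biUnion E) (fun m => ?_) hAmin
    constructor
    · intro hm
      obtain ⟨i, hi, hmi⟩ := Finset.mem_biUnion.mp hm
      rw [hFeq] at hi
      obtain ⟨j, _, hij⟩ := Finset.mem_biUnion.mp hi
      exact ⟨j, Finset.mem_biUnion.mpr ⟨i, hij, hmi⟩⟩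
    · rintro ⟨j, hj⟩
      obtain ⟨i, hi, hmi⟩ := Finset.mem_biUnion.mp hj
      exact Finset.mem_biUnion.mpr ⟨i, hsub j hi, hmi⟩
  -- case δ limit
  · classical
    have hγδ : γ + δ < omega1 := add_lt_omega1 hγ hδ
    have hδ'lt : ∀ n : ℕ, SS.limSeq δ n + 1 < δ := by
      intro n
      rw [Ordinal.add_one_eq_succ]
      exact hlim.succ_lt (SS.limSeq_lt δ hδ hlim n)
    have keyn : ∀ n : ℕ, ∃ N : Set ℕ, N.Infinite ∧ (∀ m ∈ N, 0 < m) ∧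
        ∀ F ∈ SS.S (SS.limSeq δ n + 1), F.Nonempty → ∀ E : ℕ → Finset ℕ,
          (∀ i ∈ F, E i ∈ SS.S γ) →
          (∀ i ∈ F, ∀ j ∈ F, i < j → BlockLt (E i) (E j)) →
          (∀ i ∈ F, ∀ m ∈ E i, Nat.nth (· ∈ N) (i - 1) ≤ m) →
          F.biUnion E ∈ SS.S (γ + (SS.limSeq δ n + 1)) :=
      fun n => IH _ (hδ'lt n) (lt_trans (hδ'lt n) hδ)
    choose Nn hNninf hNnpos hNnkey using keyn
    have transn : ∀ n : ℕ, ∃ m : ℕ, ∀ F ∈ SS.S (γ + (SS.limSeq δ n + 1)),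
        (∀ x ∈ F, m ≤ x) → F ∈ SS.S (γ + δ) := by
      intro n
      exact transfer SS (γ + δ) hγδ _
        ((add_lt_add_iff_left γ).mpr (hδ'lt n))
    choose mn hmn using transn
    set g : ℕ → ℕ := fun j =>
      (Finset.range (j + 2)).sup (fun n => max (Nat.nth (· ∈ Nn n) j) (mn n)) with hg
    set h : ℕ → ℕ := fun j => (∑ t ∈ Finset.range (j + 1), g t) + j + 1 with hh
    have hmono : StrictMono h := by
      apply strictMono_nat_of_lt_succ
      intro j
      have : ∑ t ∈ Finset.range (j + 1), g t ≤ ∑ t ∈ Finset.range (j + 1 + 1), g t :=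
        Finset.sum_le_sum_of_subset (Finset.range_subset_range.mpr (by omega))
      simp only [hh]
      omega
    have hge : ∀ j, g j ≤ h j := by
      intro j
      have : g j ≤ ∑ t ∈ Finset.range (j + 1), g t :=
        Finset.single_le_sum (fun i _ => Nat.zero_le _) (Finset.self_mem_range_succ j)
      simp only [hh]
      omega
    have hnthh : ∀ j, Nat.nth (· ∈ Set.range h) j = h j := nth_range hmono
    refine ⟨Set.range h, Set.infinite_range_of_injective hmono.injective, ?_, ?_⟩
    · rintro m ⟨j, rfl⟩; simp only [hh]; omega
    intro F hF hFne E hE hElt hEmin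
    rw [SS.lim_def δ hδ hlim] at hF
    rcases hF with rfl | ⟨-, n, hnF, hFmem⟩
    · exact absurd hFne (by simp)
    have hipos : ∀ i ∈ F, 0 < i := pos_succ SS hFmem
    have hgn : ∀ i ∈ F, max (Nat.nth (· ∈ Nn n) (i - 1)) (mn n) ≤ g (i - 1) := by
      intro i hi
      refine Finset.le_sup (f := fun n => max (Nat.nth (· ∈ Nn n) (i - 1)) (mn n)) ?_
      have h1 := hnF i hi
      have h2 := hipos i hi
      exact Finset.mem_range.mpr (by omega)
    have hEmin' : ∀ i ∈ F, ∀ m ∈ E i, g (i - 1) ≤ m := by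
      intro i hi m hm
      have := hEmin i hi m hm
      rw [hnthh] at this
      exact le_trans (hge _) this
    have hU : F.biUnion E ∈ SS.S (γ + (SS.limSeq δ n + 1)) :=
      hNnkey n F hFmem hFne E hE hElt
        (fun i hi m hm => le_trans (le_trans (le_max_left _ _) (hgn i hi))
          (hEmin' i hi m hm))
    refine hmn n _ hU ?_
    intro x hx
    obtain ⟨i, hi, hxi⟩ := Finset.mem_biUnion.mp hx
    exact le_trans (le_trans (le_max_right _ _) (hgn i hi)) (hEmin' i hi x hxi)

/-- Proposition `combinatorics` (v) of the paper. For all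
`γ, δ < ω₁` there is an infinite `N` such that for every nonempty `F ∈ S_δ` and every
family `(E_i)_{i ∈ F}` of successive members of `S_γ` with `min E_i ≥ N(i)` for all
`i ∈ F`, one has `⋃_{i ∈ F} E_i ∈ S_{γ+δ}`. (Here `Nat.nth (· ∈ N) (i - 1)` is the
`i`-th smallest element `N(i)` of `N`.) -/
theorem statement12 (SS : SchreierSystem) (γ δ : Ordinal) (hγ : γ < omega1)
    (hδ : δ < omega1) :
    ∃ N : Set ℕ, N.Infinite ∧ (∀ m ∈ N, 0 < m) ∧
      ∀ F ∈ SS.S δ, F.Nonempty → ∀ E : ℕ → Finset ℕ,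
        (∀ i ∈ F, E i ∈ SS.S γ) →
        (∀ i ∈ F, ∀ j ∈ F, i < j → BlockLt (E i) (E j)) →
        (∀ i ∈ F, ∀ m ∈ E i, Nat.nth (· ∈ N) (i - 1) ≤ m) →
        F.biUnion E ∈ SS.S (γ + δ) := by
  exact key SS γ hγ δ hδ

end SchreierPaper
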